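/- Logical equivalence is symmetric: if Γ ⊢ M ≈ N : A then Γ ⊢ N ≈ M : A. -/

import Mathlib

/-- Simple types: base type `i` and function types. -/
inductive Ty : Type
  | base : Ty
  | arr  : Ty → Ty → Ty

/-- Untyped lambda terms with de Bruijn indices. -/
inductive Tm : Type
  | var : ℕ → Tm
  | lam : Tm → Tm
  | app : Tm → Tm → Tm

namespace Tm

def upRen (ρ : ℕ → ℕ) : ℕ → ℕ
  | 0 => 0
  | n + 1 => ρ n + 1

/-- Renaming. -/
def rename (ρ : ℕ → ℕ) : Tm → Tm
  | var n => var (ρ n)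
  | lam M => lam (rename (upRen ρ) M)
  | app M N => app (rename ρ M) (rename ρ N)

/-- Lifting a simultaneous substitution under a binder. -/
def lift (σ : ℕ → Tm) : ℕ → Tm
  | 0 => var 0
  | n + 1 => rename Nat.succ (σ n)

/-- Simultaneous (capture-avoiding) substitution. -/
def subst (σ : ℕ → Tm) : Tm → Tm
  | var n => σ n
  | lam M => lam (subst (lift σ) M)
  | app M N => app (subst σ M) (subst σ N)

/-- Extending a substitution with a term for the top variable. -/
def scons (N : Tm) (σ : ℕ → Tm) : ℕ → Tm
  | 0 => N
  | n + 1 => σ n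

/-- Substitution of a single term for the top variable. -/
def subst1 (N M : Tm) : Tm := subst (scons N var) M

end Tm

/-- Single-step weak head reduction. -/
inductive Step : Tm → Tm → Prop
  | beta {M N : Tm} : Step (Tm.app (Tm.lam M) N) (Tm.subst1 N M)
  | app {M M' N : Tm} : Step M M' → Step (Tm.app M N) (Tm.app M' N)

/-- Multi-step weak head reduction (reflexive-transitive closure). -/
inductive MStep : Tm → Tm → Prop
  | refl {M : Tm} : MStep M M
  | trans1 {M M' M'' : Tm} : Step M M' → MStep M' M'' → MStep M M''

/-- Paths (neutral terms): a variable applied to arguments. -/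
inductive IsPath : Tm → Prop
  | var {n : ℕ} : IsPath (Tm.var n)
  | app {M N : Tm} : IsPath M → IsPath (Tm.app M N)

/-- Typing contexts (de Bruijn): the `n`-th entry types variable `n`. -/
abbrev Ctx := List Ty

mutual
  /-- Algorithmic term equivalence `Γ ⊢ M ⇔ N : A`. -/
  inductive AlgTm : Ctx → Tm → Tm → Ty → Prop
    | base {Γ : Ctx} {M N P Q : Tm} :
        MStep M P → MStep N Q → AlgPath Γ P Q Ty.base → AlgTm Γ M N Ty.base
    | arr {Γ : Ctx} {M N : Tm} {A B : Ty} :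
        AlgTm (A :: Γ) (Tm.app (Tm.rename Nat.succ M) (Tm.var 0))
                       (Tm.app (Tm.rename Nat.succ N) (Tm.var 0)) B →
        AlgTm Γ M N (Ty.arr A B)

  /-- Algorithmic path equivalence `Γ ⊢ M ↔ N : A`. -/
  inductive AlgPath : Ctx → Tm → Tm → Ty → Prop
    | var {Γ : Ctx} {n : ℕ} {A : Ty} :
        Γ[n]? = some A → AlgPath Γ (Tm.var n) (Tm.var n) A
    | app {Γ : Ctx} {M1 M2 N1 N2 : Tm} {A B : Ty} :
        AlgPath Γ M1 M2 (Ty.arr A B) → AlgTm Γ N1 N2 A →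
        AlgPath Γ (Tm.app M1 N1) (Tm.app M2 N2) B
end

/-- `PathSub Δ π Γ`: π maps each variable `x:T` of Γ to a path `P` with `Δ ⊢ P ↔ P : T`. -/
def PathSub (Δ : Ctx) (π : ℕ → Tm) (Γ : Ctx) : Prop :=
  ∀ n A, Γ[n]? = some A → AlgPath Δ (π n) (π n) A

/-- Logical equivalence `Γ ⊢ M ≈ N : A`, defined by recursion on the type. -/
def Log : Ty → Ctx → Tm → Tm → Prop
  | Ty.base => fun Γ M N => AlgTm Γ M N Ty.base
  | Ty.arr A B => fun Γ M N =>
      ∀ (Δ : Ctx) (π : ℕ → Tm), PathSub Δ π Γ →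
        ∀ N1 N2, Log A Δ N1 N2 →
          Log B Δ (Tm.app (Tm.subst π M) N1) (Tm.app (Tm.subst π N) N2)

/-- `LogSub Δ σ1 σ2 Γ`: the substitutions σ1, σ2 are pointwise logically related at Γ. -/
def LogSub (Δ : Ctx) (σ1 σ2 : ℕ → Tm) (Γ : Ctx) : Prop :=
  ∀ n A, Γ[n]? = some A → Log A Δ (σ1 n) (σ2 n)

/-- Declarative equivalence `Γ ⊢ M ≡ N : A`. -/
inductive Decl : Ctx → Tm → Tm → Ty → Prop
  | beta {Γ : Ctx} {M1 M2 N1 N2 : Tm} {A B : Ty} :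
      Decl (A :: Γ) M2 N2 B → Decl Γ M1 N1 A →
      Decl Γ (Tm.app (Tm.lam M2) M1) (Tm.subst1 N1 N2) B
  | lam {Γ : Ctx} {M N : Tm} {A B : Ty} :
      Decl (A :: Γ) M N B → Decl Γ (Tm.lam M) (Tm.lam N) (Ty.arr A B)
  | ext {Γ : Ctx} {M N : Tm} {A B : Ty} :
      Decl (A :: Γ) (Tm.app (Tm.rename Nat.succ M) (Tm.var 0))
                    (Tm.app (Tm.rename Nat.succ N) (Tm.var 0)) B →
      Decl Γ M N (Ty.arr A B)
  | var {Γ : Ctx} {n : ℕ} {A : Ty} :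
      Γ[n]? = some A → Decl Γ (Tm.var n) (Tm.var n) A
  | app {Γ : Ctx} {M1 M2 N1 N2 : Tm} {A B : Ty} :
      Decl Γ M1 M2 (Ty.arr A B) → Decl Γ N1 N2 A →
      Decl Γ (Tm.app M1 N1) (Tm.app M2 N2) B
  | symm {Γ : Ctx} {M N : Tm} {A : Ty} : Decl Γ M N A → Decl Γ N M A
  | trans {Γ : Ctx} {M N O : Tm} {A : Ty} :
      Decl Γ M N A → Decl Γ N O A → Decl Γ M O A

theorem algTm_symm {Γ M N A} (h : AlgTm Γ M N A) : AlgTm Γ N M A :=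
  AlgTm.rec (motive_1 := fun Γ M N A _ => AlgTm Γ N M A)
    (motive_2 := fun Γ M N A _ => AlgPath Γ N M A)
    (fun h1 h2 _ ih => AlgTm.base h2 h1 ih)
    (fun _ ih => AlgTm.arr ih)
    (fun h => AlgPath.var h)
    (fun _ _ ih1 ih2 => AlgPath.app ih1 ih2)
    h

/-- Logical equivalence is symmetric. -/
theorem log_symm {Gamma : Ctx} {M N : Tm} {A : Ty}
    (h : Log A Gamma M N) : Log A Gamma N M := by
  induction A generalizing Gamma M N with
  | base => exact algTm_symm h
  | arr A B ihA ihB =>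
    intro Δ π hπ N1 N2 hN
    exact ihB (h Δ π hπ N2 N1 (ihA hN))
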